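/- Let λ, t, χ ∈ ℝ and r ∈ ℕ. Let σ₂ = !![0, −i; i, 0], σ₃ = !![1, 0; 0, −1], U = exp(i(π/4)σ₂), V(φ) = exp(iφσ₃)·U, σ = U†σ₃U, and let the coin density matrix be ρ_c = (1/2)·1 + (1/2)·sin(2χ)·cos(λt√(r+1))·cos(λt√r)·σ₂ + (1/2)·[cos(2λt√(r+1))·cos²χ − cos(2λt√r)·sin²χ]·σ₃. Then for all φ ∈ ℝ, Tr[(σ + V(φ)†σV(φ)) ρ_c] = [−cos(2λt√(r+1))·cos²χ + cos(2λt√r)·sin²χ]·cos(2φ) + [sin(2χ)·cos(λt√(r+1))·cos(λt√r)]·sin(2φ). -/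

import Mathlib

open Matrix Real

/-- The second Pauli matrix. -/
noncomputable def pauli2 : Matrix (Fin 2) (Fin 2) ℂ := !![0, -Complex.I; Complex.I, 0]

/-- The third Pauli matrix. -/
noncomputable def pauli3 : Matrix (Fin 2) (Fin 2) ℂ := !![1, 0; 0, -1]

/-- The coin reshuffling matrix `U = exp(i(π/4)σ₂)`. -/
noncomputable def Umat : Matrix (Fin 2) (Fin 2) ℂ :=
  NormedSpace.exp ((Complex.I * ((π : ℝ) / 4 : ℝ)) • pauli2)

/-- The coin evolution matrix `V(φ) = exp(iφσ₃)·U`. -/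
noncomputable def coinV (φ : ℝ) : Matrix (Fin 2) (Fin 2) ℂ :=
  NormedSpace.exp ((Complex.I * (φ : ℂ)) • pauli3) * Umat

namespace QRWaux

noncomputable def P : Matrix (Fin 2) (Fin 2) ℂ := !![1, 1; Complex.I, -Complex.I]
noncomputable def Q : Matrix (Fin 2) (Fin 2) ℂ := !![1/2, -(Complex.I)/2; 1/2, Complex.I/2]

lemma diag2 (a b : ℂ) : Matrix.diagonal ![a, b] = !![a, 0; 0, b] := by
  ext i j
  fin_cases i <;> fin_cases j <;> simp [Matrix.diagonal_apply]

lemma hPQ : P * Q = 1 := by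
  ext i j
  fin_cases i <;> fin_cases j <;>
    simp [P, Q, Matrix.mul_apply, Fin.sum_univ_two, Matrix.one_apply] <;>
    ring_nf <;> simp [Complex.I_sq]

lemma exp_smul_pauli2 (θ : ℝ) :
    NormedSpace.exp ((Complex.I * (θ : ℂ)) • pauli2) =
      !![(Real.cos θ : ℂ), Real.sin θ; -(Real.sin θ : ℂ), Real.cos θ] := by
  have hU : IsUnit P := (Matrix.isUnit_iff_isUnit_det P).mpr
    (Matrix.isUnit_det_of_right_inverse hPQ)
  have hPinv : P⁻¹ = Q := Matrix.inv_eq_right_inv hPQ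
  have hA : (Complex.I * (θ : ℂ)) • pauli2 =
      P * Matrix.diagonal ![Complex.I * θ, -(Complex.I * θ)] * P⁻¹ := by
    rw [hPinv, diag2]
    ext i j
    fin_cases i <;> fin_cases j <;>
      simp [P, Q, pauli2, Matrix.mul_apply, Fin.sum_univ_two] <;>
      ring_nf <;> simp [Complex.I_sq] <;> ring
  rw [hA, Matrix.exp_conj P _ hU, Matrix.exp_diagonal, hPinv]
  have h1 : NormedSpace.exp ![Complex.I * θ, -(Complex.I * θ)] =
      ![Real.cos θ + Real.sin θ * Complex.I, Real.cos θ - Real.sin θ * Complex.I] := by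
    funext i
    have he1 : Complex.exp (Complex.I * θ) = Real.cos θ + Real.sin θ * Complex.I := by
      rw [mul_comm, Complex.exp_mul_I]; simp
    have he2 : Complex.exp (-(Complex.I * θ)) = Real.cos θ - Real.sin θ * Complex.I := by
      rw [mul_comm, ← neg_mul, Complex.exp_mul_I]; simp; ring
    fin_cases i <;> simp [Pi.coe_exp, ← Complex.exp_eq_exp_ℂ, he1, he2]
  rw [h1, diag2]
  ext i j
  fin_cases i <;> fin_cases j <;>
    simp [P, Q, Matrix.mul_apply, Fin.sum_univ_two] <;>
    ring_nf <;> simp [Complex.I_sq] <;> ring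

lemma exp_smul_pauli3 (φ : ℝ) :
    NormedSpace.exp ((Complex.I * (φ : ℂ)) • pauli3) =
      !![Real.cos φ + Real.sin φ * Complex.I, 0; 0, Real.cos φ - Real.sin φ * Complex.I] := by
  have hA : (Complex.I * (φ : ℂ)) • pauli3 =
      Matrix.diagonal ![Complex.I * φ, -(Complex.I * φ)] := by
    rw [diag2]
    ext i j
    fin_cases i <;> fin_cases j <;> simp [pauli3] <;> ring
  rw [hA, Matrix.exp_diagonal]
  have h1 : NormedSpace.exp ![Complex.I * φ, -(Complex.I * φ)] =
      ![Real.cos φ + Real.sin φ * Complex.I, Real.cos φ - Real.sin φ * Complex.I] := by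
    funext i
    have he1 : Complex.exp (Complex.I * φ) = Real.cos φ + Real.sin φ * Complex.I := by
      rw [mul_comm, Complex.exp_mul_I]; simp
    have he2 : Complex.exp (-(Complex.I * φ)) = Real.cos φ - Real.sin φ * Complex.I := by
      rw [mul_comm, ← neg_mul, Complex.exp_mul_I]; simp; ring
    fin_cases i <;> simp [Pi.coe_exp, ← Complex.exp_eq_exp_ℂ, he1, he2]
  rw [h1, diag2]

end QRWaux

namespace QRWaux

lemma h2sq : ((Real.sqrt 2 : ℝ) : ℂ) ^ 2 = 2 := by
  norm_cast
  exact Real.sq_sqrt (by norm_num)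

lemma Umat_eq : Umat =
    !![((Real.sqrt 2 / 2 : ℝ) : ℂ), ((Real.sqrt 2 / 2 : ℝ) : ℂ);
       -((Real.sqrt 2 / 2 : ℝ) : ℂ), ((Real.sqrt 2 / 2 : ℝ) : ℂ)] := by
  have := exp_smul_pauli2 (π / 4)
  rw [Real.cos_pi_div_four, Real.sin_pi_div_four] at this
  simpa [Umat] using this

lemma sigma_eq : Umatᴴ * pauli3 * Umat = !![0, 1; 1, 0] := by
  rw [Umat_eq]
  ext i j
  fin_cases i <;> fin_cases j <;>
    simp [pauli3, Matrix.mul_apply, Fin.sum_univ_two, Matrix.conjTranspose_apply,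
      Complex.conj_ofReal, map_ofNat] <;>
    ring_nf <;> simp only [h2sq] <;> ring

lemma Vconj (φ : ℝ) : (coinV φ)ᴴ * !![(0 : ℂ), 1; 1, 0] * coinV φ =
    !![-((Real.cos (2 * φ) : ℝ) : ℂ), -(Complex.I * ((Real.sin (2 * φ) : ℝ) : ℂ));
       Complex.I * ((Real.sin (2 * φ) : ℝ) : ℂ), ((Real.cos (2 * φ) : ℝ) : ℂ)] := by
  have hV : coinV φ =
      !![(Real.cos φ + Real.sin φ * Complex.I), 0; 0, (Real.cos φ - Real.sin φ * Complex.I)] *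
        !![((Real.sqrt 2 / 2 : ℝ) : ℂ), ((Real.sqrt 2 / 2 : ℝ) : ℂ);
           -((Real.sqrt 2 / 2 : ℝ) : ℂ), ((Real.sqrt 2 / 2 : ℝ) : ℂ)] := by
    rw [coinV, exp_smul_pauli3, Umat_eq]
  rw [hV]
  have hc : ((Real.cos (2 * φ) : ℝ) : ℂ) =
      ((Real.cos φ : ℝ) : ℂ) ^ 2 - ((Real.sin φ : ℝ) : ℂ) ^ 2 := by
    have h : Real.cos (2 * φ) = Real.cos φ ^ 2 - Real.sin φ ^ 2 := by
      rw [Real.cos_two_mul]; nlinarith [Real.sin_sq_add_cos_sq φ]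
    rw [h]; push_cast; ring
  have hs : ((Real.sin (2 * φ) : ℝ) : ℂ) =
      2 * ((Real.sin φ : ℝ) : ℂ) * ((Real.cos φ : ℝ) : ℂ) := by
    rw [Real.sin_two_mul]; push_cast; ring
  have hVH : (!![(Real.cos φ + Real.sin φ * Complex.I), 0; 0, (Real.cos φ - Real.sin φ * Complex.I)] *
        !![((Real.sqrt 2 / 2 : ℝ) : ℂ), ((Real.sqrt 2 / 2 : ℝ) : ℂ);
           -((Real.sqrt 2 / 2 : ℝ) : ℂ), ((Real.sqrt 2 / 2 : ℝ) : ℂ)])ᴴ =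
      !![((Real.sqrt 2 / 2 : ℝ) : ℂ) * (Real.cos φ - Real.sin φ * Complex.I),
         -(((Real.sqrt 2 / 2 : ℝ) : ℂ) * (Real.cos φ + Real.sin φ * Complex.I));
         ((Real.sqrt 2 / 2 : ℝ) : ℂ) * (Real.cos φ - Real.sin φ * Complex.I),
         ((Real.sqrt 2 / 2 : ℝ) : ℂ) * (Real.cos φ + Real.sin φ * Complex.I)] := by
    ext i j
    fin_cases i <;> fin_cases j <;>
      simp [Matrix.conjTranspose_apply, Matrix.mul_apply, Fin.sum_univ_two,
        Complex.conj_ofReal, map_ofNat, -Complex.ofReal_cos, -Complex.ofReal_sin] <;> ring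
  rw [hVH]
  ext i j
  fin_cases i <;> fin_cases j <;>
    simp [Matrix.mul_apply, Fin.sum_univ_two, hc, hs] <;>
    ring_nf <;> simp only [h2sq, Complex.I_sq] <;> ring

end QRWaux

/-- Eq. (17): the asymptotic characteristic function of the ε_{V²} walk driven by
the Jaynes–Cummings-prepared coin state. -/
theorem asympChar2_of_JCM_coin
    (lam t χ : ℝ) (r : ℕ)
    (ρc : Matrix (Fin 2) (Fin 2) ℂ)
    (hρc : ρc = ((1 / 2 : ℂ)) • (1 : Matrix (Fin 2) (Fin 2) ℂ) +
      (((1 / 2) * sin (2 * χ) * cos (lam * t * Real.sqrt ((r : ℝ) + 1)) *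
          cos (lam * t * Real.sqrt (r : ℝ)) : ℝ) : ℂ) • pauli2 +
      (((1 / 2) * (cos (2 * lam * t * Real.sqrt ((r : ℝ) + 1)) * cos χ ^ 2 -
          cos (2 * lam * t * Real.sqrt (r : ℝ)) * sin χ ^ 2) : ℝ) : ℂ) • pauli3) :
    ∀ φ : ℝ,
      (((Umatᴴ * pauli3 * Umat) +
          (coinV φ)ᴴ * (Umatᴴ * pauli3 * Umat) * coinV φ) * ρc).trace =
      (((-cos (2 * lam * t * Real.sqrt ((r : ℝ) + 1)) * cos χ ^ 2 +
            cos (2 * lam * t * Real.sqrt (r : ℝ)) * sin χ ^ 2) * cos (2 * φ) +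
          (sin (2 * χ) * cos (lam * t * Real.sqrt ((r : ℝ) + 1)) *
            cos (lam * t * Real.sqrt (r : ℝ))) * sin (2 * φ) : ℝ) : ℂ) := by
  intro φ
  rw [QRWaux.sigma_eq, QRWaux.Vconj, hρc, pauli2, pauli3, Matrix.one_fin_two]
  simp only [Matrix.trace_fin_two, Matrix.mul_apply, Fin.sum_univ_two, Matrix.add_apply,
    Matrix.smul_apply, Matrix.cons_val', Matrix.cons_val_zero, Matrix.cons_val_one,
    Matrix.head_cons, Matrix.head_fin_const, Matrix.empty_val', Matrix.cons_val_fin_one,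
    smul_eq_mul, Matrix.of_apply]
  push_cast
  ring_nf
  simp only [Complex.I_sq]
  ring
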